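/- arXiv:2305.10881 — 5 statements merged into one kernel-verified Lean document; each statement's English description precedes it below -/
import Mathlib

section
/- Let z_0 = γ with 0 < γ < 1/4 and z_{t+1} = sqrt(z_t(1 - z_t)). If t ≥ log₂(log₂(1/γ)) (with t a natural number), then z_t ≥ 1/4. -/
/-!
While `z ≤ 1/2`, which holds from the first step on because `z (1 - z) ≤ 1/4`, the factor
`1 - z` is at least `1/2`, so `z_{t+1} ≥ √(z_t / 2)`. Hence the bound `γ ^ (1/2^t) / 2 ≤ z_t`
propagates: the square root halves the exponent and preserves the factor `1/2`. Once
`2^t ≥ log₂ (1/γ)` we have `γ ^ (1/2^t) ≥ 2⁻¹`, so `z_t ≥ 1/4`.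
-/

open Real

theorem sqrt_mul_one_sub_le_half (x : ℝ) : √(x * (1 - x)) ≤ 1 / 2 :=
  sqrt_le_iff.mpr ⟨by norm_num, by nlinarith [sq_nonneg (x - 1 / 2)]⟩

theorem sqrt_rpow_half_pow {γ : ℝ} (hγ : 0 ≤ γ) (t : ℕ) :
    √(γ ^ ((1 / 2 : ℝ) ^ t)) = γ ^ ((1 / 2 : ℝ) ^ (t + 1)) := by
  rw [sqrt_eq_rpow, ← rpow_mul hγ, pow_succ]

section SqrtIterate

variable {γ : ℝ} {z : ℕ → ℝ}

theorem sqrt_iterate_le_half (hγ : γ ≤ 1 / 2) (h0 : z 0 = γ)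
    (hrec : ∀ t, z (t + 1) = √(z t * (1 - z t))) : ∀ t, z t ≤ 1 / 2
  | 0 => h0 ▸ hγ
  | t + 1 => hrec t ▸ sqrt_mul_one_sub_le_half (z t)

theorem rpow_half_pow_div_two_le_sqrt_iterate (hγ0 : 0 ≤ γ) (hγ : γ ≤ 1 / 2) (h0 : z 0 = γ)
    (hrec : ∀ t, z (t + 1) = √(z t * (1 - z t))) (t : ℕ) :
    γ ^ ((1 / 2 : ℝ) ^ t) / 2 ≤ z t := by
  induction t with
  | zero => rw [h0, pow_zero, rpow_one]; linarith
  | succ k ih =>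
    have ha : 0 ≤ γ ^ ((1 / 2 : ℝ) ^ k) := rpow_nonneg hγ0 _
    have hzk := sqrt_iterate_le_half hγ h0 hrec k
    rw [hrec, ← sqrt_rpow_half_pow hγ0]
    apply le_sqrt_of_sq_le
    rw [div_pow, sq_sqrt ha]
    nlinarith

end SqrtIterate

theorem half_le_rpow_half_pow {γ : ℝ} (hγ0 : 0 < γ) (hγ1 : γ < 1) {t : ℕ}
    (ht : logb 2 (logb 2 (1 / γ)) ≤ t) : 1 / 2 ≤ γ ^ ((1 / 2 : ℝ) ^ t) := by
  set L := logb 2 (1 / γ) with hL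
  have hL0 : 0 < L := logb_pos one_lt_two ((one_lt_div hγ0).mpr hγ1)
  have hL_le : L ≤ 2 ^ t := by
    rw [← rpow_natCast]; exact (logb_le_iff_le_rpow one_lt_two hL0).mp ht
  have hlogb : logb 2 γ = -L := by rw [hL, one_div, logb_inv, neg_neg]
  have hexp : -1 ≤ (1 / 2 : ℝ) ^ t * logb 2 γ := by
    rw [hlogb, one_div, inv_pow, mul_neg, inv_mul_eq_div, neg_le_neg_iff,
      div_le_one (by positivity)]
    exact hL_le
  have := (le_logb_iff_rpow_le one_lt_two (rpow_pos_of_pos hγ0 _)).mp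
    (hexp.trans_eq (logb_rpow_eq_mul_logb_of_pos hγ0).symm)
  rwa [rpow_neg_one, ← one_div] at this

theorem stmt_3 (γ : ℝ) (hγ0 : 0 < γ) (hγ4 : γ < 1/4)
    (z : ℕ → ℝ) (h0 : z 0 = γ)
    (hrec : ∀ t, z (t+1) = Real.sqrt (z t * (1 - z t)))
    (t : ℕ) (ht : (t : ℝ) ≥ Real.logb 2 (Real.logb 2 (1/γ))) :
    z t ≥ 1/4 := by
  have hz := rpow_half_pow_div_two_le_sqrt_iterate hγ0.le (by linarith) h0 hrec t
  have hγt := half_le_rpow_half_pow hγ0 (by linarith) ht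
  linarith
end

section
/- In the two-agent lottery contest with unit costs, the maximum utility agent 1 can achieve given agent 2 plays x₂ ∈ (0,1) is (1 - sqrt(x₂))². Moreover, if x₂ ≥ 1/4 - ε̂ with 0 ≤ ε̂ ≤ 1/16, then max_s u₁(s, x₂) ≤ (1/4)(1 + 9ε̂). -/
/-
With r = √x₂, the gap between (1 - r)² and agent 1's utility is a perfect square over the
total effort: (1 - r)² - (s/(s + r²) - s) = (s + r² - r)² / (s + r²). So the utility never exceeds
(1 - r)², with equality at s = r - r², which is admissible since r² ≤ r for r ≤ 1. For the second
claim, (1 - r)² decreases in r on [0, 1], and r² ≥ 1/4 - ε gives r ≥ 1/2 - 13ε/8 as long as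
(1/2 - 13ε/8)² ≤ 1/4 - ε, i.e. ε ≤ 40/169.
-/

open Real

lemma one_sub_sqrt_sq_sub_div_add_sub_eq {x : ℝ} (hx : 0 ≤ x) {s : ℝ} (hsx : s + x ≠ 0) :
    (1 - √x) ^ 2 - (s / (s + x) - s) = (s + x - √x) ^ 2 / (s + x) := by
  obtain ⟨r, hr, rfl⟩ : ∃ r, 0 ≤ r ∧ x = r ^ 2 := ⟨√x, sqrt_nonneg x, (sq_sqrt hx).symm⟩
  rw [sqrt_sq hr]
  field_simp
  ring

lemma div_add_sub_le_one_sub_sqrt_sq {x : ℝ} (hx : 0 < x) {s : ℝ} (hs : 0 ≤ s) :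
    s / (s + x) - s ≤ (1 - √x) ^ 2 := by
  have hsx : 0 < s + x := by linarith
  have hgap := one_sub_sqrt_sq_sub_div_add_sub_eq hx.le hsx.ne'
  have : 0 ≤ (s + x - √x) ^ 2 / (s + x) := by positivity
  linarith

lemma div_add_sub_eq_one_sub_sqrt_sq_of_add_eq_sqrt {x : ℝ} (hx : 0 < x) {s : ℝ}
    (hs : s + x = √x) : s / (s + x) - s = (1 - √x) ^ 2 := by
  obtain ⟨r, hr, rfl⟩ : ∃ r, 0 < r ∧ x = r ^ 2 := ⟨√x, sqrt_pos.mpr hx, (sq_sqrt hx.le).symm⟩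
  rw [sqrt_sq hr.le] at hs ⊢
  rw [hs, eq_sub_of_add_eq hs]
  field_simp

lemma one_sub_sqrt_sq_le {x ε : ℝ} (hx : x ≤ 1) (hε0 : 0 ≤ ε) (hε : ε ≤ 1 / 16)
    (hεx : 1 / 4 - ε ≤ x) : (1 - √x) ^ 2 ≤ 1 / 4 * (1 + 9 * ε) := by
  have hr1 : √x ≤ 1 := sqrt_le_one.mpr hx
  have hr_ge : 1 / 2 - 13 * ε / 8 ≤ √x := le_sqrt_of_sq_le (by nlinarith)
  nlinarith

theorem stmt_9 (x₂ : ℝ) (hx0 : 0 < x₂) (hx1 : x₂ < 1) :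
    (IsGreatest {u : ℝ | ∃ s : ℝ, 0 ≤ s ∧ u = s / (s + x₂) - s}
      ((1 - Real.sqrt x₂)^2)) ∧
    (∀ ε : ℝ, 0 ≤ ε → ε ≤ 1/16 → 1/4 - ε ≤ x₂ →
      ∀ s : ℝ, 0 ≤ s → s / (s + x₂) - s ≤ (1/4) * (1 + 9 * ε)) := by
  have hmax : 0 ≤ √x₂ - x₂ := sub_nonneg.mpr (le_sqrt_self_iff.mpr hx1.le)
  have hattained := div_add_sub_eq_one_sub_sqrt_sq_of_add_eq_sqrt hx0 (sub_add_cancel (√x₂) x₂)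
  refine ⟨⟨⟨√x₂ - x₂, hmax, hattained.symm⟩, ?_⟩, ?_⟩
  · rintro u ⟨s, hs, rfl⟩
    exact div_add_sub_le_one_sub_sqrt_sq hx0 hs
  · intro ε hε0 hε hεx s hs
    exact (div_add_sub_le_one_sub_sqrt_sq hx0 hs).trans (one_sub_sqrt_sq_le hx1.le hε0 hε hεx)
end

section
/- In the two-agent lottery contest with unit costs, if x₁, x₂ ∈ [1/4 - ε/16, 1/4] for 0 ≤ ε ≤ 1, then (x₁, x₂) is an ε-approximate pure-strategy Nash equilibrium: u_i(x) ≥ (1-ε) · max_{s≥0} u_i(s, x_{-i}) for each i. -/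
/-!
Since `x₁ + x₂ ≤ 1/2`, each agent's share is at least `2 x_i`, so its utility is at least
`x_i ≥ 1/4 - ε/16`. Writing `s/(s+b) - s = 1 + b - (s + b + b/(s+b))`, AM-GM bounds every
deviation payoff against `b` by `(1 - √b)²`, and `√b ≥ 1/2 - ε/8` gives
`(1 - ε)(1 - √b)² ≤ 1/4 - ε/16`.
-/

open Real

noncomputable def lotteryPayoff (x y : ℝ) : ℝ := x / (x + y) - x

lemma le_lotteryPayoff_of_add_le_half {a b : ℝ} (ha : 0 ≤ a) (hab : 0 < a + b)
    (hab' : a + b ≤ 1/2) : a ≤ lotteryPayoff a b := by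
  have hshare : 2 * a ≤ a / (a + b) := by
    rw [le_div_iff₀ hab]
    nlinarith
  unfold lotteryPayoff
  linarith

lemma lotteryPayoff_le_sq_one_sub_sqrt {s b : ℝ} (hs : 0 ≤ s) (hb : 0 < b) :
    lotteryPayoff s b ≤ (1 - √b) ^ 2 := by
  have hsb : 0 < s + b := by linarith
  have hsqrt : √b ^ 2 = b := sq_sqrt hb.le
  have amgm : 2 * √b ≤ s + b + b / (s + b) := by
    rw [← sub_nonneg]
    have : s + b + b / (s + b) - 2 * √b = (s + b - √b) ^ 2 / (s + b) := by
      field_simp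
      linear_combination -hsqrt
    rw [this]
    positivity
  have hrewrite : lotteryPayoff s b = 1 + b - (s + b + b / (s + b)) := by
    unfold lotteryPayoff
    field_simp
    ring
  rw [hrewrite]
  nlinarith

lemma one_sub_mul_sq_one_sub_sqrt_le {ε b : ℝ} (hε0 : 0 ≤ ε) (hε1 : ε ≤ 1)
    (hb : 1/4 - ε/16 ≤ b) (hb1 : b ≤ 1) : (1 - ε) * (1 - √b) ^ 2 ≤ 1/4 - ε/16 := by
  have hsqrt : 1/2 - ε/8 ≤ √b :=
    (le_abs_self _).trans (abs_le_sqrt (by nlinarith))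
  have hgap : 0 ≤ 1 - √b := by
    rw [sub_nonneg]
    exact sqrt_le_one.mpr hb1
  calc (1 - ε) * (1 - √b) ^ 2 ≤ (1 - ε) * (1/2 + ε/8) ^ 2 := by
        gcongr
        linarith
    _ ≤ 1/4 - ε/16 := by nlinarith [mul_nonneg hε0 (sq_nonneg ε)]

lemma one_sub_mul_lotteryPayoff_le_lotteryPayoff {ε a b : ℝ} (hε1 : ε ≤ 1)
    (hal : 1/4 - ε/16 ≤ a) (hau : a ≤ 1/4) (hbl : 1/4 - ε/16 ≤ b) (hbu : b ≤ 1/4)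
    {s : ℝ} (hs : 0 ≤ s) :
    lotteryPayoff a b ≥ (1 - ε) * lotteryPayoff s b := by
  have hε0 : 0 ≤ ε := by linarith
  calc (1 - ε) * lotteryPayoff s b ≤ (1 - ε) * (1 - √b) ^ 2 :=
        mul_le_mul_of_nonneg_left (lotteryPayoff_le_sq_one_sub_sqrt hs (by linarith))
          (by linarith)
    _ ≤ 1/4 - ε/16 := one_sub_mul_sq_one_sub_sqrt_le hε0 hε1 hbl (by linarith)
    _ ≤ a := hal
    _ ≤ lotteryPayoff a b := le_lotteryPayoff_of_add_le_half (by linarith) (by linarith)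
          (by linarith)

theorem stmt_10_general (ε : ℝ) (hε1 : ε ≤ 1)
    (x₁ x₂ : ℝ)
    (h1l : 1/4 - ε/16 ≤ x₁) (h1u : x₁ ≤ 1/4)
    (h2l : 1/4 - ε/16 ≤ x₂) (h2u : x₂ ≤ 1/4) :
    (∀ s : ℝ, 0 ≤ s →
      x₁ / (x₁ + x₂) - x₁ ≥ (1 - ε) * (s / (s + x₂) - s)) ∧
    (∀ s : ℝ, 0 ≤ s →
      x₂ / (x₁ + x₂) - x₂ ≥ (1 - ε) * (s / (x₁ + s) - s)) := by
  refine ⟨fun s hs => one_sub_mul_lotteryPayoff_le_lotteryPayoff hε1 h1l h1u h2l h2u hs,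
    fun s hs => ?_⟩
  rw [add_comm x₁ x₂, add_comm x₁ s]
  exact one_sub_mul_lotteryPayoff_le_lotteryPayoff hε1 h2l h2u h1l h1u hs

theorem stmt_10 (ε : ℝ) (hε0 : 0 ≤ ε) (hε1 : ε ≤ 1)
    (x₁ x₂ : ℝ)
    (h1l : 1/4 - ε/16 ≤ x₁) (h1u : x₁ ≤ 1/4)
    (h2l : 1/4 - ε/16 ≤ x₂) (h2u : x₂ ≤ 1/4) :
    (∀ s : ℝ, 0 ≤ s →
      x₁ / (x₁ + x₂) - x₁ ≥ (1 - ε) * (s / (s + x₂) - s)) ∧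
    (∀ s : ℝ, 0 ≤ s →
      x₂ / (x₁ + x₂) - x₂ ≥ (1 - ε) * (s / (x₁ + s) - s)) :=
  stmt_10_general ε hε1 x₁ x₂ h1l h1u h2l h2u
end

section
/- Let f(z) = (1/3)(Σᵢ zᵢ)³ - Σ_{i<j} zᵢzⱼ + (1/6)((n-1)/n)³ for z ∈ ℝ_{≥0}^n with Σᵢ zᵢ < 1. Then 0 ≤ f(z) ≤ 1/2. -/
noncomputable def potential (n : ℕ) (z : Fin n → ℝ) : ℝ :=
  (1/3) * (∑ i, z i)^3
    - ∑ i, ∑ j ∈ Finset.univ.filter (fun j => i < j), z i * z j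
    + (1/6) * (((n : ℝ) - 1)/n)^3

/-! With `S = ∑ zᵢ`, `P = ∑_{i<j} zᵢ zⱼ` and `c = (n - 1)/n`, the potential is
`S³/3 - P + c³/6`. Since `2P = S² - ∑ zᵢ²` and `∑ zᵢ² ≥ S²/n`, we get `2P ≤ c S²`, so the
potential is at least `S³/3 - c S²/2 + c³/6 = (S - c)² (2S + c)/6 ≥ 0`. The upper bound only
needs `P ≥ 0`, `S < 1` and `c ≤ 1`. -/

open Finset

section PairSum

variable {ι R : Type*} [Fintype ι] [LinearOrder ι]

def pairSum [CommSemiring R] (z : ι → R) : R :=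
  ∑ i, ∑ j ∈ univ.filter (fun j => i < j), z i * z j

theorem two_mul_pairSum_add_sum_sq [CommSemiring R] (z : ι → R) :
    2 * pairSum z + ∑ i, z i ^ 2 = (∑ i, z i) ^ 2 := by
  have split : ∀ i j, z i * z j = ((if i < j then z i * z j else 0)
      + if j < i then z j * z i else 0) + if i = j then z i ^ 2 else 0 := by
    intro i j
    rcases lt_trichotomy i j with h | rfl | h
    · simp [h, h.not_gt, h.ne]
    · simp [sq]
    · simp [h, h.not_gt, h.ne', mul_comm (z j)]
  rw [sq (∑ i, z i), sum_mul_sum, sum_congr rfl fun i _ => sum_congr rfl fun j _ => split i j]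
  simp only [sum_add_distrib, sum_ite_eq]
  rw [sum_comm (f := fun i j => if j < i then z j * z i else 0)]
  simp [pairSum, sum_filter, two_mul]

theorem pairSum_nonneg [CommSemiring R] [PartialOrder R] [IsOrderedRing R] {z : ι → R}
    (hz : ∀ i, 0 ≤ z i) : 0 ≤ pairSum z :=
  sum_nonneg fun i _ => sum_nonneg fun j _ => mul_nonneg (hz i) (hz j)

theorem two_mul_pairSum_le (z : ι → ℝ) :
    2 * pairSum z ≤ ((Fintype.card ι : ℝ) - 1) / Fintype.card ι * (∑ i, z i) ^ 2 := by
  rcases (Fintype.card ι).eq_zero_or_pos with hcard | hcard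
  · have : IsEmpty ι := Fintype.card_eq_zero_iff.mp hcard
    simp [pairSum]
  have hQ : (∑ i, z i) ^ 2 ≤ Fintype.card ι * ∑ i, z i ^ 2 := by
    simpa using sq_sum_le_card_mul_sum_sq (s := univ) (f := z)
  rw [div_mul_eq_mul_div, le_div_iff₀ (by positivity)]
  nlinarith [two_mul_pairSum_add_sum_sq z]

end PairSum

theorem natCast_sub_one_div_self_nonneg (n : ℕ) : 0 ≤ ((n : ℝ) - 1) / n := by
  rcases n with _ | n
  · simp
  · simp only [Nat.cast_succ, add_sub_cancel_right]
    positivity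

theorem stmt_12_general (n : ℕ) (z : Fin n → ℝ)
    (hz : ∀ i, 0 ≤ z i) (hs : ∑ i, z i < 1) :
    0 ≤ potential n z ∧ potential n z ≤ 1/2 := by
  set S := ∑ i, z i
  set c := ((n : ℝ) - 1) / n
  have hpot : potential n z = S ^ 3 / 3 - pairSum z + c ^ 3 / 6 := by
    unfold potential pairSum
    ring
  have hS : 0 ≤ S := sum_nonneg fun i _ => hz i
  have hc0 : 0 ≤ c := natCast_sub_one_div_self_nonneg n
  have hc1 : c ≤ 1 := div_le_one_of_le₀ (by linarith) n.cast_nonneg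
  have hP : 2 * pairSum z ≤ c * S ^ 2 := by simpa using two_mul_pairSum_le z
  rw [hpot]
  constructor
  · have hcubic : 0 ≤ (S - c) ^ 2 * (2 * S + c) := by positivity
    linarith
  · have hS3 : S ^ 3 ≤ 1 := pow_le_one₀ hS hs.le
    have hc3 : c ^ 3 ≤ 1 := pow_le_one₀ hc0 hc1
    linarith [pairSum_nonneg hz]

theorem stmt_12 (n : ℕ) (hn : 2 ≤ n) (z : Fin n → ℝ)
    (hz : ∀ i, 0 ≤ z i) (hs : ∑ i, z i < 1) :
    0 ≤ potential n z ∧ potential n z ≤ 1/2 :=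
  stmt_12_general n z hz hs
end

section
/- Let f(z) = (1/3)(Σᵢ zᵢ)³ - Σ_{i<j} zᵢzⱼ + (1/6)((n-1)/n)³ for z ∈ ℝ_{≥0}^n with Σᵢ zᵢ < 1. If Σᵢ zᵢ ≤ 3(n-1)/(4n), then f(z) ≥ (1/40)((n-1)/n)³. -/
/-! Cauchy–Schwarz bounds the pair sum `∑_{i<j} zᵢzⱼ` by `((n-1)/(2n)) σ²`, so
`potential n z ≥ g σ + (1/6) a³` with `a = (n-1)/n` and `g y = y³/3 - (a/2) y²`. The cubic `g`
decreases on `[0, a]`, hence for `0 ≤ σ ≤ 3a/4` the potential is at least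
`g (3a/4) + a³/6 = (5/192) a³ ≥ a³/40`. -/

open Finset

section PairSum

variable {ι : Type*} [Fintype ι] [LinearOrder ι]

theorem sq_sum_eq_sum_sq_add_two_mul_sum_lt {R : Type*} [CommSemiring R] (f : ι → R) :
    (∑ i, f i) ^ 2 = ∑ i, f i ^ 2 + 2 * ∑ i, ∑ j ∈ univ.filter (fun j => i < j), f i * f j := by
  have split : ∀ i j, f i * f j = ((if i < j then f i * f j else 0) +
      (if j < i then f i * f j else 0)) + (if i = j then f i * f j else 0) := by
    intro i j
    rcases lt_trichotomy i j with h | rfl | h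
    · simp [h, h.not_gt, h.ne]
    · simp
    · simp [h, h.not_gt, h.ne']
  have lower_eq_upper : ∑ i, ∑ j, (if j < i then f i * f j else 0) =
      ∑ i, ∑ j, (if i < j then f i * f j else 0) := by
    rw [sum_comm]
    exact sum_congr rfl fun i _ => sum_congr rfl fun j _ => by rw [mul_comm]
  calc (∑ i, f i) ^ 2 = ∑ i, ∑ j, f i * f j := by rw [sq, sum_mul_sum]
    _ = _ := by
      rw [sum_congr rfl fun i _ => sum_congr rfl fun j _ => split i j]
      simp only [sum_add_distrib]
      rw [lower_eq_upper]
      simp only [sum_ite_eq, mem_univ, if_true, ← sum_filter, sq]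
      ring

theorem sum_lt_mul_le_sq_sum (f : ι → ℝ) :
    ∑ i, ∑ j ∈ univ.filter (fun j => i < j), f i * f j
      ≤ ((Fintype.card ι - 1) / Fintype.card ι) / 2 * (∑ i, f i) ^ 2 := by
  rcases isEmpty_or_nonempty ι with hι | hι
  · simp
  have hcard : (0 : ℝ) < Fintype.card ι := by exact_mod_cast Fintype.card_pos
  have cauchySchwarz : (∑ i, f i) ^ 2 / Fintype.card ι ≤ ∑ i, f i ^ 2 := by
    rw [div_le_iff₀' hcard]
    simpa using sq_sum_le_card_mul_sum_sq (s := univ) (f := f)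
  have hrhs : ((Fintype.card ι - 1) / Fintype.card ι) / 2 * (∑ i, f i) ^ 2
      = ((∑ i, f i) ^ 2 - (∑ i, f i) ^ 2 / Fintype.card ι) / 2 := by
    field_simp
  rw [hrhs]
  linarith [sq_sum_eq_sum_sq_add_two_mul_sum_lt f]

end PairSum

theorem antitoneOn_cubic (a : ℝ) :
    AntitoneOn (fun y : ℝ => y ^ 3 / 3 - a / 2 * y ^ 2) (Set.Icc 0 a) := by
  rintro x ⟨hx0, hxa⟩ y ⟨hy0, hya⟩ hxy
  have hquad : x ^ 2 + x * y + y ^ 2 ≤ 3 / 2 * a * (x + y) := by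
    nlinarith [sq_nonneg (x - y), mul_le_mul_of_nonneg_left hxa hx0,
      mul_le_mul_of_nonneg_left hya hy0]
  have hfactor : (x ^ 3 / 3 - a / 2 * x ^ 2) - (y ^ 3 / 3 - a / 2 * y ^ 2)
      = (y - x) * (a / 2 * (x + y) - (x ^ 2 + x * y + y ^ 2) / 3) := by ring
  have hdiff : 0 ≤ (y - x) * (a / 2 * (x + y) - (x ^ 2 + x * y + y ^ 2) / 3) :=
    mul_nonneg (by linarith) (by linarith)
  dsimp only
  linarith

theorem potential_ge_cubic (n : ℕ) (z : Fin n → ℝ) :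
    (∑ i, z i) ^ 3 / 3 - (((n : ℝ) - 1) / n) / 2 * (∑ i, z i) ^ 2
      + (1/6) * (((n : ℝ) - 1) / n) ^ 3 ≤ potential n z := by
  have hpairs := sum_lt_mul_le_sq_sum z
  rw [Fintype.card_fin] at hpairs
  unfold potential
  linarith

theorem stmt_13_general (n : ℕ) (z : Fin n → ℝ)
    (hz : ∀ i, 0 ≤ z i)
    (hσ : ∑ i, z i ≤ 3 * ((n : ℝ) - 1) / (4 * n)) :
    potential n z ≥ (1/40) * (((n : ℝ) - 1)/n)^3 := by
  set a : ℝ := ((n : ℝ) - 1) / n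
  have hσa : ∑ i, z i ≤ 3 / 4 * a := by
    convert hσ using 1
    ring
  have hσ0 : 0 ≤ ∑ i, z i := sum_nonneg fun i _ => hz i
  have ha : 0 ≤ a := by linarith
  have hcubic := antitoneOn_cubic a ⟨hσ0, by linarith⟩ ⟨by positivity, by linarith⟩ hσa
  have hpot := potential_ge_cubic n z
  simp only at hcubic
  linarith [pow_nonneg ha 3]

theorem stmt_13 (n : ℕ) (hn : 2 ≤ n) (z : Fin n → ℝ)
    (hz : ∀ i, 0 ≤ z i) (hs : ∑ i, z i < 1)
    (hσ : ∑ i, z i ≤ 3 * ((n : ℝ) - 1) / (4 * n)) :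
    potential n z ≥ (1/40) * (((n : ℝ) - 1)/n)^3 :=
  stmt_13_general n z hz hσ
end
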